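/- arXiv:2101.06839 — 3 statements merged into one kernel-verified Lean document; each statement's English description precedes it below -/
import Mathlib

section
/- Let X_1, ..., X_n (n \ge 4) be i.i.d. random vectors in R^p with covariance matrix \Sigma and finite fourth moments. Then the estimator \widehat{\|\Sigma\|_F^2} = (1/(4 binom(n,4))) \sum_{1 \le j_1 < j_2 < j_3 < j_4 \le n} tr((X_{j_1} - X_{j_2})(X_{j_1} - X_{j_2})^T (X_{j_3} - X_{j_4})(X_{j_3} - X_{j_4})^T) is unbiased: E[\widehat{\|\Sigma\|_F^2}] = \|\Sigma\|_F^2. -/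
/-!
For distinct indices `i, j, k, l` the vectors `X i - X j` and `X k - X l` are independent, so the
expected trace factors as `∑ a b, E[(X i - X j)_a (X i - X j)_b] · E[(X k - X l)_a (X k - X l)_b]`.
Each factor is `2 Σ_ab`, because the cross covariances of independent vectors vanish. Hence every
summand has expectation `4 ‖Σ‖_F²`, and there are `n.choose 4` summands.
-/

open MeasureTheory ProbabilityTheory Matrix

def increasingQuadruplesEquiv (n : ℕ) :
    {j : Fin n × Fin n × Fin n × Fin n // j.1 < j.2.1 ∧ j.2.1 < j.2.2.1 ∧ j.2.2.1 < j.2.2.2}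
      ≃ (Fin 4 ↪o Fin n) where
  toFun j := OrderEmbedding.ofStrictMono ![j.1.1, j.1.2.1, j.1.2.2.1, j.1.2.2.2] <| by
    obtain ⟨_, h₁, h₂, h₃⟩ := j
    simp [Fin.strictMono_iff_lt_succ, Fin.forall_fin_succ, h₁, h₂, h₃]
  invFun f := ⟨(f 0, f 1, f 2, f 3), f.strictMono (by decide), f.strictMono (by decide),
    f.strictMono (by decide)⟩
  left_inv _ := rfl
  right_inv f := by ext i; fin_cases i <;> rfl

theorem card_filter_lt_lt_lt (n : ℕ) :
    (Finset.univ.filter (fun j : Fin n × Fin n × Fin n × Fin n =>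
      j.1 < j.2.1 ∧ j.2.1 < j.2.2.1 ∧ j.2.2.1 < j.2.2.2)).card = n.choose 4 := by
  rw [← Fintype.card_subtype, ← Nat.card_eq_fintype_card,
    Nat.card_congr ((increasingQuadruplesEquiv n).trans Set.powersetCard.ofFinEmbEquiv),
    Set.powersetCard.card, Nat.card_eq_fintype_card, Fintype.card_fin]

theorem Matrix.trace_vecMulVec_self_mul_vecMulVec_self {ι R : Type*} [Fintype ι] [CommSemiring R]
    (a b : ι → R) :
    trace (vecMulVec a a * vecMulVec b b) = ∑ k, ∑ l, (a k * a l) * (b k * b l) := by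
  simp only [trace, diag, mul_apply, vecMulVec_apply]
  exact Finset.sum_congr rfl fun k _ ↦ Finset.sum_congr rfl fun l _ ↦ by ring

namespace ProbabilityTheory

section Moments

variable {Ω ι : Type*} [MeasurableSpace Ω] {μ : Measure Ω}

theorem integral_sub_mul_sub_of_indepFun [IsFiniteMeasure μ] {U V : Ω → ι → ℝ}
    (hUV : IndepFun U V μ) (hU : ∀ a, MemLp (fun ω ↦ U ω a) 2 μ)
    (hV : ∀ a, MemLp (fun ω ↦ V ω a) 2 μ) (hmean : ∀ a, μ[fun ω ↦ U ω a] = μ[fun ω ↦ V ω a])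
    (a b : ι) :
    ∫ ω, (U ω a - V ω a) * (U ω b - V ω b) ∂μ
      = cov[fun ω ↦ U ω a, fun ω ↦ U ω b; μ] + cov[fun ω ↦ V ω a, fun ω ↦ V ω b; μ] := by
  have hcentered (c : ι) : μ[fun ω ↦ U ω c - V ω c] = 0 := by
    rw [integral_sub ((hU c).integrable one_le_two) ((hV c).integrable one_le_two), hmean,
      sub_self]
  have hcross (c d : ι) : IndepFun (fun ω ↦ U ω c) (fun ω ↦ V ω d) μ :=
    hUV.comp (measurable_pi_apply c) (measurable_pi_apply d)
  calc ∫ ω, (U ω a - V ω a) * (U ω b - V ω b) ∂μ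
      = cov[fun ω ↦ U ω a - V ω a, fun ω ↦ U ω b - V ω b; μ] := by
        simp only [covariance, hcentered, sub_zero]
    _ = _ := by
        rw [covariance_fun_sub_fun_sub (hU a) (hV a) (hU b) (hV b),
          (hcross a b).covariance_eq_zero (hU a) (hV b),
          (hcross b a).symm.covariance_eq_zero (hV a) (hU b)]
        ring

variable {D E : Ω → ι → ℝ}

theorem IndepFun.apply_mul_apply (hDE : IndepFun D E μ) (k l : ι) :
    IndepFun (fun ω ↦ D ω k * D ω l) (fun ω ↦ E ω k * E ω l) μ :=
  hDE.comp (φ := fun x : ι → ℝ ↦ x k * x l) (ψ := fun x : ι → ℝ ↦ x k * x l)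
    (by fun_prop) (by fun_prop)

theorem IndepFun.integrable_apply_mul_apply_mul (hDE : IndepFun D E μ)
    (hD : ∀ a, MemLp (fun ω ↦ D ω a) 2 μ) (hE : ∀ a, MemLp (fun ω ↦ E ω a) 2 μ) (k l : ι) :
    Integrable (fun ω ↦ (D ω k * D ω l) * (E ω k * E ω l)) μ :=
  (hDE.apply_mul_apply k l).integrable_mul ((hD k).integrable_mul (hD l))
    ((hE k).integrable_mul (hE l))

variable [Fintype ι]

theorem integrable_trace_vecMulVec_self_mul_vecMulVec_self (hDE : IndepFun D E μ)
    (hD : ∀ a, MemLp (fun ω ↦ D ω a) 2 μ) (hE : ∀ a, MemLp (fun ω ↦ E ω a) 2 μ) :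
    Integrable (fun ω ↦ trace (vecMulVec (D ω) (D ω) * vecMulVec (E ω) (E ω))) μ := by
  simp only [trace_vecMulVec_self_mul_vecMulVec_self]
  exact integrable_finsetSum _ fun k _ ↦ integrable_finsetSum _ fun l _ ↦
    hDE.integrable_apply_mul_apply_mul hD hE k l

theorem integral_trace_vecMulVec_self_mul_vecMulVec_self (hDE : IndepFun D E μ)
    (hD : ∀ a, MemLp (fun ω ↦ D ω a) 2 μ) (hE : ∀ a, MemLp (fun ω ↦ E ω a) 2 μ) :
    ∫ ω, trace (vecMulVec (D ω) (D ω) * vecMulVec (E ω) (E ω)) ∂μ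
      = ∑ k, ∑ l, (∫ ω, D ω k * D ω l ∂μ) * ∫ ω, E ω k * E ω l ∂μ := by
  have hint := hDE.integrable_apply_mul_apply_mul hD hE
  simp only [trace_vecMulVec_self_mul_vecMulVec_self]
  rw [integral_finsetSum _ fun k _ ↦ integrable_finsetSum _ fun l _ ↦ hint k l]
  refine Finset.sum_congr rfl fun k _ ↦ ?_
  rw [integral_finsetSum _ fun l _ ↦ hint k l]
  exact Finset.sum_congr rfl fun l _ ↦ (hDE.apply_mul_apply k l).integral_fun_mul_eq_mul_integral
    ((hD k).integrable_mul (hD l)).aestronglyMeasurable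
    ((hE k).integrable_mul (hE l)).aestronglyMeasurable

end Moments

section IIDFamily

variable {Ω ι κ : Type*} [MeasurableSpace Ω] {μ : Measure Ω}
  {X : κ → Ω → ι → ℝ} {m : ι → ℝ} {Sig : Matrix ι ι ℝ}

theorem integral_sub_mul_sub_of_iIndepFun [IsFiniteMeasure μ] (hindep : iIndepFun X μ)
    (hX : ∀ i a, MemLp (fun ω ↦ X i ω a) 2 μ) (hmean : ∀ i a, ∫ ω, X i ω a ∂μ = m a)
    (hcov : ∀ i a b, ∫ ω, (X i ω a - m a) * (X i ω b - m b) ∂μ = Sig a b)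
    {i j : κ} (hij : i ≠ j) (a b : ι) :
    ∫ ω, (X i ω a - X j ω a) * (X i ω b - X j ω b) ∂μ = 2 * Sig a b := by
  have hcov' (i : κ) : cov[fun ω ↦ X i ω a, fun ω ↦ X i ω b; μ] = Sig a b := by
    simp only [covariance, hmean, hcov]
  rw [integral_sub_mul_sub_of_indepFun (hindep.indepFun hij) (hX i) (hX j)
    (fun c ↦ (hmean i c).trans (hmean j c).symm), hcov', hcov', two_mul]

variable [Fintype ι]

theorem integrable_trace_vecMulVec_sub_of_iIndepFun (hXm : ∀ i, Measurable (X i))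
    (hindep : iIndepFun X μ) (hX : ∀ i a, MemLp (fun ω ↦ X i ω a) 2 μ)
    {i j k l : κ} (hik : i ≠ k) (hil : i ≠ l) (hjk : j ≠ k) (hjl : j ≠ l) :
    Integrable (fun ω ↦ trace (vecMulVec (X i ω - X j ω) (X i ω - X j ω) *
      vecMulVec (X k ω - X l ω) (X k ω - X l ω))) μ :=
  integrable_trace_vecMulVec_self_mul_vecMulVec_self (D := fun ω ↦ X i ω - X j ω)
    (E := fun ω ↦ X k ω - X l ω) (hindep.indepFun_sub_sub hXm i j k l hik hil hjk hjl)
    (fun a ↦ (hX i a).sub (hX j a)) (fun a ↦ (hX k a).sub (hX l a))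

theorem integral_trace_vecMulVec_sub_of_iIndepFun [IsFiniteMeasure μ] (hXm : ∀ i, Measurable (X i))
    (hindep : iIndepFun X μ) (hX : ∀ i a, MemLp (fun ω ↦ X i ω a) 2 μ)
    (hmean : ∀ i a, ∫ ω, X i ω a ∂μ = m a)
    (hcov : ∀ i a b, ∫ ω, (X i ω a - m a) * (X i ω b - m b) ∂μ = Sig a b)
    {i j k l : κ} (hij : i ≠ j) (hkl : k ≠ l) (hik : i ≠ k) (hil : i ≠ l) (hjk : j ≠ k)
    (hjl : j ≠ l) :
    ∫ ω, trace (vecMulVec (X i ω - X j ω) (X i ω - X j ω) *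
      vecMulVec (X k ω - X l ω) (X k ω - X l ω)) ∂μ = 4 * ∑ a, ∑ b, Sig a b ^ 2 := by
  rw [integral_trace_vecMulVec_self_mul_vecMulVec_self (D := fun ω ↦ X i ω - X j ω)
    (E := fun ω ↦ X k ω - X l ω) (hindep.indepFun_sub_sub hXm i j k l hik hil hjk hjl)
    (fun a ↦ (hX i a).sub (hX j a)) (fun a ↦ (hX k a).sub (hX l a))]
  simp only [Pi.sub_apply, integral_sub_mul_sub_of_iIndepFun hindep hX hmean hcov hij,
    integral_sub_mul_sub_of_iIndepFun hindep hX hmean hcov hkl, Finset.mul_sum]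
  exact Finset.sum_congr rfl fun a _ ↦ Finset.sum_congr rfl fun b _ ↦ by ring

end IIDFamily

end ProbabilityTheory

theorem stmt_2_general {Ω : Type*} [MeasurableSpace Ω] (μ : Measure Ω) [IsProbabilityMeasure μ]
    (p n : ℕ) (hn : 4 ≤ n) (X : Fin n → Ω → Fin p → ℝ) (m : Fin p → ℝ)
    (Sig : Matrix (Fin p) (Fin p) ℝ)
    (hXm : ∀ i, Measurable (X i))
    (hindep : iIndepFun X μ)
    (hX4 : ∀ i l, MemLp (fun ω => X i ω l) 4 μ)
    (hmean : ∀ i l, ∫ ω, X i ω l ∂μ = m l)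
    (hcov : ∀ i : Fin n, ∀ l₁ l₂ : Fin p,
      ∫ ω, (X i ω l₁ - m l₁) * (X i ω l₂ - m l₂) ∂μ = Sig l₁ l₂) :
    ∫ ω, (1 / (4 * (n.choose 4 : ℝ))) *
        ∑ j ∈ Finset.univ.filter
          (fun j : Fin n × Fin n × Fin n × Fin n =>
            j.1 < j.2.1 ∧ j.2.1 < j.2.2.1 ∧ j.2.2.1 < j.2.2.2),
          Matrix.trace
            (Matrix.vecMulVec (X j.1 ω - X j.2.1 ω) (X j.1 ω - X j.2.1 ω) *
              Matrix.vecMulVec (X j.2.2.1 ω - X j.2.2.2 ω) (X j.2.2.1 ω - X j.2.2.2 ω)) ∂μ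
      = ∑ l₁, ∑ l₂, Sig l₁ l₂ ^ 2 := by
  have hX2 (i : Fin n) (a : Fin p) : MemLp (fun ω ↦ X i ω a) 2 μ :=
    (hX4 i a).mono_exponent (by norm_num)
  have hchoose : (n.choose 4 : ℝ) ≠ 0 := by exact_mod_cast (Nat.choose_pos hn).ne'
  rw [integral_const_mul, integral_finsetSum,
    Finset.sum_congr rfl (g := fun _ ↦ 4 * ∑ a, ∑ b, Sig a b ^ 2), Finset.sum_const,
    card_filter_lt_lt_lt, nsmul_eq_mul]
  · field_simp
  all_goals
    rintro ⟨i, j, k, l⟩ hq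
    obtain ⟨hij, hjk, hkl⟩ : i < j ∧ j < k ∧ k < l := by simpa using hq
  · exact integral_trace_vecMulVec_sub_of_iIndepFun hXm hindep hX2 hmean hcov hij.ne hkl.ne
      (hij.trans hjk).ne (hij.trans (hjk.trans hkl)).ne hjk.ne (hjk.trans hkl).ne
  · exact integrable_trace_vecMulVec_sub_of_iIndepFun hXm hindep hX2
      (hij.trans hjk).ne (hij.trans (hjk.trans hkl)).ne hjk.ne (hjk.trans hkl).ne

/-- The U-statistic estimator of the squared Frobenius norm of the covariance
matrix is unbiased: for i.i.d. X_1, ..., X_n (n ≥ 4) with covariance Σ and finite fourth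
moments,
E[(1/(4 C(n,4))) ∑_{j1<j2<j3<j4} tr((X_{j1}-X_{j2})(X_{j1}-X_{j2})ᵀ(X_{j3}-X_{j4})(X_{j3}-X_{j4})ᵀ)]
  = ‖Σ‖_F². -/
theorem stmt_2 {Ω : Type*} [MeasurableSpace Ω] (μ : Measure Ω) [IsProbabilityMeasure μ]
    (p n : ℕ) (hn : 4 ≤ n) (X : Fin n → Ω → Fin p → ℝ) (m : Fin p → ℝ)
    (Sig : Matrix (Fin p) (Fin p) ℝ)
    (hXm : ∀ i, Measurable (X i))
    (hindep : iIndepFun X μ)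
    (hident : ∀ i j, IdentDistrib (X i) (X j) μ μ)
    (hX4 : ∀ i l, MemLp (fun ω => X i ω l) 4 μ)
    (hmean : ∀ i l, ∫ ω, X i ω l ∂μ = m l)
    (hcov : ∀ i : Fin n, ∀ l₁ l₂ : Fin p,
      ∫ ω, (X i ω l₁ - m l₁) * (X i ω l₂ - m l₂) ∂μ = Sig l₁ l₂) :
    ∫ ω, (1 / (4 * (n.choose 4 : ℝ))) *
        ∑ j ∈ Finset.univ.filter
          (fun j : Fin n × Fin n × Fin n × Fin n =>
            j.1 < j.2.1 ∧ j.2.1 < j.2.2.1 ∧ j.2.2.1 < j.2.2.2),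
          Matrix.trace
            (Matrix.vecMulVec (X j.1 ω - X j.2.1 ω) (X j.1 ω - X j.2.1 ω) *
              Matrix.vecMulVec (X j.2.2.1 ω - X j.2.2.2 ω) (X j.2.2.1 ω - X j.2.2.2 ω)) ∂μ
      = ∑ l₁, ∑ l₂, Sig l₁ l₂ ^ 2 :=
  stmt_2_general μ p n hn X m Sig hXm hindep hX4 hmean hcov
end

section
/- Let q be a positive even integer and X_1,...,X_n (n \ge 2q) be i.i.d. random vectors in R^p with covariance matrix \Sigma and finite moments of order 2q. Then \widehat{\|\Sigma\|_q^q} = (1/(2^q binom(n,2q))) \sum_{l_1,l_2=1}^p \sum_{1 \le i_1 < \cdots < i_q < j_1 < \cdots < j_q \le n} \prod_{k=1}^q (X_{i_k,l_1} - X_{j_k,l_1})(X_{i_k,l_2} - X_{j_k,l_2}) satisfies E[\widehat{\|\Sigma\|_q^q}] = \|\Sigma\|_q^q = \sum_{l_1,l_2=1}^p \Sigma_{l_1,l_2}^q. -/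
/-!
Every summand of the estimator involves 2q distinct indices, so the q pairs
`(X_{i_k}, X_{j_k})` are mutually independent and its expectation factors into
`∏ₖ E[(X_{i_k,l₁} - X_{j_k,l₁}) (X_{i_k,l₂} - X_{j_k,l₂})]`. Each factor is
`Σ_{l₁l₂} + Σ_{l₁l₂} = 2 Σ_{l₁l₂}`, the cross-covariances vanishing by independence. Hence every
summand has expectation `(2 Σ_{l₁l₂})^q`, and there are `C(n, 2q)` summands, one for each
`2q`-subset of `{1, …, n}`.
-/

open MeasureTheory ProbabilityTheory Finset Function

theorem Fin.strictMono_append_iff {α : Type*} [Preorder α] {m k : ℕ} {u : Fin m → α}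
    {v : Fin k → α} :
    StrictMono (Fin.append u v) ↔ StrictMono u ∧ StrictMono v ∧ ∀ a b, u a < v b := by
  refine ⟨fun h ↦ ⟨fun a b hab ↦ ?_, fun a b hab ↦ ?_, fun a b ↦ ?_⟩, ?_⟩
  · simpa using h (strictMono_castAdd k hab)
  · simpa using h (strictMono_natAdd m hab)
  · simpa using @h (castAdd k a) (natAdd m b) (Fin.lt_def.2 (by simp; omega))
  · rintro ⟨hu, hv, huv⟩ a b hab
    induction a using Fin.addCases <;> induction b using Fin.addCases
    · simpa using hu ((strictMono_castAdd k).lt_iff_lt.1 hab)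
    · simpa using huv _ _
    · exact absurd (Fin.lt_def.1 hab) (by simp; omega)
    · simpa using hv ((strictMono_natAdd m).lt_iff_lt.1 hab)

def sortedSplits (n q r : ℕ) : Finset ((Fin q → Fin n) × (Fin r → Fin n)) :=
  univ.filter fun ij ↦
    (∀ a b : Fin q, a < b → ij.1 a < ij.1 b) ∧ (∀ a b : Fin r, a < b → ij.2 a < ij.2 b) ∧
      ∀ a b, ij.1 a < ij.2 b

theorem card_sortedSplits (n q r : ℕ) : #(sortedSplits n q r) = n.choose (q + r) := by
  rw [sortedSplits, ← Fintype.card_subtype, ← Nat.card_eq_fintype_card]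
  let e : {f : Fin (q + r) → Fin n // StrictMono f} ≃ (Fin (q + r) ↪o Fin n) :=
    { toFun f := OrderEmbedding.ofStrictMono f.1 f.2
      invFun f := ⟨f, f.strictMono⟩ }
  calc _ = Nat.card (Fin (q + r) ↪o Fin n) :=
        Nat.card_congr <| ((Fin.appendEquiv q r).subtypeEquiv fun _ ↦
          Fin.strictMono_append_iff.symm).trans e
    _ = Nat.card (Set.powersetCard (Fin n) (q + r)) :=
        Nat.card_congr Set.powersetCard.ofFinEmbEquiv
    _ = _ := by rw [Set.powersetCard.card, Nat.card_eq_fintype_card, Fintype.card_fin]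

theorem injective_sumElim_of_mem_sortedSplits {n q r : ℕ} {ij : (Fin q → Fin n) × (Fin r → Fin n)}
    (h : ij ∈ sortedSplits n q r) : Injective (Sum.elim ij.1 ij.2) := by
  obtain ⟨-, hi, hj, hij⟩ := mem_filter.1 h
  exact (StrictMono.injective fun a b ↦ hi a b).sumElim (StrictMono.injective fun a b ↦ hj a b)
    fun a b ↦ (hij a b).ne

namespace ProbabilityTheory

variable {Ω ι κ β : Type*} [MeasurableSpace Ω] {μ : Measure Ω}

theorem iIndepFun.prodMk_of_injective [MeasurableSpace β] [Fintype κ] {X : ι → Ω → β}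
    (hXm : ∀ w, Measurable (X w)) (hX : iIndepFun X μ) {i j : κ → ι}
    (hij : Injective (Sum.elim i j)) :
    iIndepFun (fun k ω ↦ (X (i k) ω, X (j k) ω)) μ := by
  have := hX.isProbabilityMeasure
  have hlaw := (hX.precomp hij).map_fun_eq_pi_map fun w ↦ (hXm _).aemeasurable
  have hpair (k : κ) : μ.map (fun ω ↦ (X (i k) ω, X (j k) ω))
      = (μ.map (X (i k))).prod (μ.map (X (j k))) :=
    (indepFun_iff_map_prod_eq_prod_map_map (hXm _).aemeasurable (hXm _).aemeasurable).1
      (hX.indepFun (hij.ne Sum.inl_ne_inr))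
  -- the pair map is a reshuffling of coordinates of the independent family `X ∘ Sum.elim i j`
  have hmap_eq : (fun ω k ↦ (X (i k) ω, X (j k) ω)) =
      (MeasurableEquiv.arrowProdEquivProdArrow β β κ).symm ∘
        MeasurableEquiv.sumPiEquivProdPi (fun _ ↦ β) ∘ fun ω w ↦ X (Sum.elim i j w) ω := rfl
  rw [iIndepFun_iff_map_fun_eq_pi_map fun k ↦ by fun_prop]
  simp_rw [hpair]
  rw [hmap_eq, ← Measure.map_map (by fun_prop) (by fun_prop),
    ← Measure.map_map (by fun_prop) (by fun_prop), hlaw,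
    (measurePreserving_sumPiEquivProdPi _).map_eq,
    (measurePreserving_arrowProdEquivProdArrow β β κ _ _).symm.map_eq]
  rfl

theorem iIndepFun.integrable_finsetProd {g : κ → Ω → ℝ} (h : iIndepFun g μ)
    (hm : ∀ k, Measurable (g k)) (hint : ∀ k, Integrable (g k) μ) (s : Finset κ) :
    Integrable (∏ k ∈ s, g k) μ := by
  classical
  have := h.isProbabilityMeasure
  induction s using Finset.induction_on with
  | empty => exact integrable_const 1
  | insert a s ha ih =>
    rw [prod_insert ha]
    exact (h.indepFun_finsetProd_of_notMem hm ha).symm.integrable_mul (hint a) ih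

variable [IsProbabilityMeasure μ]

theorem integral_sub_mul_sub_eq_covariance_add_covariance {Y₁ Y₂ Z₁ Z₂ : Ω → ℝ}
    (hY₁ : MemLp Y₁ 2 μ) (hY₂ : MemLp Y₂ 2 μ) (hZ₁ : MemLp Z₁ 2 μ) (hZ₂ : MemLp Z₂ 2 μ)
    (h₁₂ : IndepFun Y₁ Z₂ μ) (h₂₁ : IndepFun Z₁ Y₂ μ) (hmean : μ[Y₁] = μ[Z₁]) :
    ∫ ω, (Y₁ ω - Z₁ ω) * (Y₂ ω - Z₂ ω) ∂μ = cov[Y₁, Y₂; μ] + cov[Z₁, Z₂; μ] := by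
  have hmean_sub : μ[Y₁ - Z₁] = 0 := by
    rw [Pi.sub_def, integral_sub (hY₁.integrable one_le_two) (hZ₁.integrable one_le_two), hmean,
      sub_self]
  calc ∫ ω, (Y₁ ω - Z₁ ω) * (Y₂ ω - Z₂ ω) ∂μ
      = cov[Y₁ - Z₁, Y₂ - Z₂; μ] := by
        rw [covariance_eq_sub (hY₁.sub hZ₁) (hY₂.sub hZ₂), hmean_sub, zero_mul, sub_zero]; rfl
    _ = cov[Y₁, Y₂; μ] - cov[Y₁, Z₂; μ] - cov[Z₁, Y₂; μ] + cov[Z₁, Z₂; μ] :=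
        covariance_sub_sub hY₁ hZ₁ hY₂ hZ₂
    _ = cov[Y₁, Y₂; μ] + cov[Z₁, Z₂; μ] := by
        rw [h₁₂.covariance_eq_zero hY₁ hZ₂, h₂₁.covariance_eq_zero hZ₁ hY₂]; ring

end ProbabilityTheory

def covKernel {Ω ι ι' κ : Type*} [Fintype κ] (X : ι → Ω → ι' → ℝ) (l₁ l₂ : ι') (i j : κ → ι)
    (ω : Ω) : ℝ :=
  ∏ k, (X (i k) ω l₁ - X (j k) ω l₁) * (X (i k) ω l₂ - X (j k) ω l₂)

section covKernel

variable {Ω ι ι' κ : Type*} [MeasurableSpace Ω] {μ : Measure Ω} [Fintype κ]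
  {X : ι → Ω → ι' → ℝ} {i j : κ → ι}

theorem iIndepFun_covKernel_factors (hXm : ∀ w, Measurable (X w)) (hX : iIndepFun X μ)
    (hij : Injective (Sum.elim i j)) (l₁ l₂ : ι') :
    iIndepFun (fun k ω ↦ (X (i k) ω l₁ - X (j k) ω l₁) * (X (i k) ω l₂ - X (j k) ω l₂)) μ :=
  (hX.prodMk_of_injective hXm hij).comp (fun _ x ↦ (x.1 l₁ - x.2 l₁) * (x.1 l₂ - x.2 l₂))
    fun _ ↦ by fun_prop

theorem integrable_covKernel (hXm : ∀ w, Measurable (X w)) (hX : iIndepFun X μ)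
    (hX2 : ∀ w l, MemLp (fun ω ↦ X w ω l) 2 μ) (hij : Injective (Sum.elim i j)) (l₁ l₂ : ι') :
    Integrable (covKernel X l₁ l₂ i j) μ := by
  have := (iIndepFun_covKernel_factors hXm hX hij l₁ l₂).integrable_finsetProd
    (fun k ↦ by fun_prop)
    (fun k ↦ ((hX2 _ l₁).sub (hX2 _ l₁)).integrable_mul ((hX2 _ l₂).sub (hX2 _ l₂))) univ
  rw [prod_fn] at this
  exact this

variable [IsProbabilityMeasure μ]

theorem integral_covKernel (hXm : ∀ w, Measurable (X w)) (hX : iIndepFun X μ)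
    (hX2 : ∀ w l, MemLp (fun ω ↦ X w ω l) 2 μ) {m : ι' → ℝ} {S : ι' → ι' → ℝ}
    (hmean : ∀ w l, ∫ ω, X w ω l ∂μ = m l)
    (hcov : ∀ w l₁ l₂, cov[fun ω ↦ X w ω l₁, fun ω ↦ X w ω l₂; μ] = S l₁ l₂)
    (hij : Injective (Sum.elim i j)) (l₁ l₂ : ι') :
    ∫ ω, covKernel X l₁ l₂ i j ω ∂μ = (2 * S l₁ l₂) ^ Fintype.card κ := by
  have hfactor (k : κ) :
      ∫ ω, (X (i k) ω l₁ - X (j k) ω l₁) * (X (i k) ω l₂ - X (j k) ω l₂) ∂μ = 2 * S l₁ l₂ := by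
    have hind : IndepFun (X (i k)) (X (j k)) μ := hX.indepFun (hij.ne Sum.inl_ne_inr)
    rw [integral_sub_mul_sub_eq_covariance_add_covariance (hX2 _ l₁) (hX2 _ l₂) (hX2 _ l₁)
      (hX2 _ l₂) (hind.comp (measurable_pi_apply l₁) (measurable_pi_apply l₂))
      (hind.symm.comp (measurable_pi_apply l₁) (measurable_pi_apply l₂))
      ((hmean _ l₁).trans (hmean _ l₁).symm), hcov, hcov, two_mul]
  unfold covKernel
  rw [(iIndepFun_covKernel_factors hXm hX hij l₁ l₂).integral_fun_prod_eq_prod_integral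
    fun k ↦ by fun_prop]
  simp [hfactor]

end covKernel

theorem stmt_3_general {Ω : Type*} [MeasurableSpace Ω] (μ : Measure Ω) [IsProbabilityMeasure μ]
    (p n q : ℕ) (hq : 0 < q) (hn : 2 * q ≤ n)
    (X : Fin n → Ω → Fin p → ℝ) (m : Fin p → ℝ) (Sig : Matrix (Fin p) (Fin p) ℝ)
    (hXm : ∀ i, Measurable (X i))
    (hindep : iIndepFun X μ)
    (hX2q : ∀ i l, MemLp (fun ω => X i ω l) (2 * q : ℕ) μ)
    (hmean : ∀ i l, ∫ ω, X i ω l ∂μ = m l)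
    (hcov : ∀ i : Fin n, ∀ l₁ l₂ : Fin p,
      ∫ ω, (X i ω l₁ - m l₁) * (X i ω l₂ - m l₂) ∂μ = Sig l₁ l₂) :
    ∫ ω, (1 / (2 ^ q * (n.choose (2 * q) : ℝ))) *
        ∑ l₁ : Fin p, ∑ l₂ : Fin p,
          ∑ ij ∈ Finset.univ.filter
            (fun ij : (Fin q → Fin n) × (Fin q → Fin n) =>
              (∀ a b : Fin q, a < b → ij.1 a < ij.1 b) ∧
              (∀ a b : Fin q, a < b → ij.2 a < ij.2 b) ∧
              (∀ a b : Fin q, ij.1 a < ij.2 b)),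
            ∏ k : Fin q,
              (X (ij.1 k) ω l₁ - X (ij.2 k) ω l₁) * (X (ij.1 k) ω l₂ - X (ij.2 k) ω l₂) ∂μ
      = ∑ l₁ : Fin p, ∑ l₂ : Fin p, Sig l₁ l₂ ^ q := by
  have hX2 : ∀ i l, MemLp (fun ω ↦ X i ω l) 2 μ := fun i l ↦
    (hX2q i l).mono_exponent (by norm_cast; omega)
  have hcov' : ∀ i l₁ l₂, cov[fun ω ↦ X i ω l₁, fun ω ↦ X i ω l₂; μ] = Sig l₁ l₂ := by
    simpa only [covariance, hmean] using hcov
  change ∫ ω, _ * ∑ l₁, ∑ l₂, ∑ ij ∈ sortedSplits n q q, covKernel X l₁ l₂ ij.1 ij.2 ω ∂μ = _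
  have hint (l₁ l₂ : Fin p) :
      ∀ ij ∈ sortedSplits n q q, Integrable (covKernel X l₁ l₂ ij.1 ij.2) μ := fun ij hij ↦
    integrable_covKernel hXm hindep hX2 (injective_sumElim_of_mem_sortedSplits hij) _ _
  have hsum (l₁ l₂ : Fin p) :
      ∫ ω, ∑ ij ∈ sortedSplits n q q, covKernel X l₁ l₂ ij.1 ij.2 ω ∂μ
        = n.choose (2 * q) * (2 * Sig l₁ l₂) ^ q := by
    rw [integral_finsetSum _ (hint l₁ l₂), sum_congr rfl fun ij hij ↦ integral_covKernel hXm
      hindep hX2 hmean hcov' (injective_sumElim_of_mem_sortedSplits hij) l₁ l₂,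
      sum_const, card_sortedSplits, ← two_mul, nsmul_eq_mul, Fintype.card_fin]
  have hC : (n.choose (2 * q) : ℝ) ≠ 0 := Nat.cast_ne_zero.2 (Nat.choose_pos hn).ne'
  rw [integral_const_mul, integral_finsetSum _ fun l₁ _ ↦ integrable_finsetSum _ fun l₂ _ ↦
    integrable_finsetSum _ (hint l₁ l₂), mul_sum]
  refine sum_congr rfl fun l₁ _ ↦ ?_
  rw [integral_finsetSum _ fun l₂ _ ↦ integrable_finsetSum _ (hint l₁ l₂), mul_sum]
  refine sum_congr rfl fun l₂ _ ↦ ?_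
  rw [hsum, mul_pow]
  field_simp

/-- Unbiasedness of the U-statistic estimator of ‖Σ‖_q^q for even q:
E[(1/(2^q C(n,2q))) ∑_{l₁,l₂} ∑_{i₁<⋯<i_q<j₁<⋯<j_q}
   ∏_k (X_{i_k,l₁}-X_{j_k,l₁})(X_{i_k,l₂}-X_{j_k,l₂})] = ∑_{l₁,l₂} Σ_{l₁,l₂}^q.
The ordered tuples i₁<⋯<i_q<j₁<⋯<j_q are encoded as pairs of strictly monotone maps
i, j : Fin q → Fin n with every i a < every j b. -/
theorem stmt_3 {Ω : Type*} [MeasurableSpace Ω] (μ : Measure Ω) [IsProbabilityMeasure μ]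
    (p n q : ℕ) (hq : 0 < q) (hqeven : Even q) (hn : 2 * q ≤ n)
    (X : Fin n → Ω → Fin p → ℝ) (m : Fin p → ℝ) (Sig : Matrix (Fin p) (Fin p) ℝ)
    (hXm : ∀ i, Measurable (X i))
    (hindep : iIndepFun X μ)
    (hident : ∀ i j, IdentDistrib (X i) (X j) μ μ)
    (hX2q : ∀ i l, MemLp (fun ω => X i ω l) (2 * q : ℕ) μ)
    (hmean : ∀ i l, ∫ ω, X i ω l ∂μ = m l)
    (hcov : ∀ i : Fin n, ∀ l₁ l₂ : Fin p,
      ∫ ω, (X i ω l₁ - m l₁) * (X i ω l₂ - m l₂) ∂μ = Sig l₁ l₂) :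
    ∫ ω, (1 / (2 ^ q * (n.choose (2 * q) : ℝ))) *
        ∑ l₁ : Fin p, ∑ l₂ : Fin p,
          ∑ ij ∈ Finset.univ.filter
            (fun ij : (Fin q → Fin n) × (Fin q → Fin n) =>
              (∀ a b : Fin q, a < b → ij.1 a < ij.1 b) ∧
              (∀ a b : Fin q, a < b → ij.2 a < ij.2 b) ∧
              (∀ a b : Fin q, ij.1 a < ij.2 b)),
            ∏ k : Fin q,
              (X (ij.1 k) ω l₁ - X (ij.2 k) ω l₁) * (X (ij.1 k) ω l₂ - X (ij.2 k) ω l₂) ∂μ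
      = ∑ l₁ : Fin p, ∑ l₂ : Fin p, Sig l₁ l₂ ^ q :=
  stmt_3_general μ p n q hq hn X m Sig hXm hindep hX2q hmean hcov
end

section
/- Let Y_1, ..., Y_{k} be vectors in R^p, \Delta \in R^p, and k* with m < k* < k. Define X_i = Y_i for i \le k* and X_i = Y_i + \Delta for i > k*. Then with G_k(m) as the two-sample U-statistic defined from the X sequence and G_k^Y(m) the same functional of the Y sequence, the exact decomposition holds: G_k(m) = G_k^Y(m) + (k-k*)(k-k*-1) m (m-1) \|\Delta\|_2^2 + (cross terms that are linear in the quantities \sum_{j \in I} Y_j^T \Delta for intervals I \subseteq {1,...,k}); in particular, E[G_k(m)] - E[G_k^Y(m)] = (k-k*)(k-k*-1) m (m-1) \|\Delta\|_2^2 when the Y_j are mean zero. -/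
open MeasureTheory ProbabilityTheory

/-- The two-sample U-statistic component
G_k(m)(Z) = ∑_l ∑*_{1≤i₁,i₂≤m} ∑*_{m+1≤j₁,j₂≤k} (Z_{i₁,l}-Z_{j₁,l})(Z_{i₂,l}-Z_{j₂,l}),
where ∑* denotes summation over ordered pairs of distinct indices within each group. -/
noncomputable def Gstat (p m k : ℕ) (Z : ℕ → Fin p → ℝ) : ℝ :=
  ∑ l : Fin p,
    ∑ i ∈ (Finset.Icc 1 m ×ˢ Finset.Icc 1 m).filter (fun i => i.1 ≠ i.2),
      ∑ j ∈ (Finset.Icc (m + 1) k ×ˢ Finset.Icc (m + 1) k).filter (fun j => j.1 ≠ j.2),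
        (Z i.1 l - Z j.1 l) * (Z i.2 l - Z j.2 l)

/-! Write `X_i = Y_i + s_i` with the deterministic shift `s_i = Δ · 1{i > k*}`. Every summand of
`G_k(m)(X)` has the form `(A + a)(B + b)` with `A, B` differences of the mean-zero `Y`'s, so its
expectation is `E[AB] + ab`: the cross terms vanish and `E G_k(m)(X) = E G_k(m)(Y) + G_k(m)(s)`.
Since `m < k*`, the first group sees no shift, so a summand of `G_k(m)(s)` equals `Δ_l²` when both
second-group indices exceed `k*` and vanishes otherwise; counting these pairs gives
`(k - k*)(k - k* - 1) m (m - 1)`. -/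

open Finset

theorem Finset.card_filter_product_ne {α : Type*} [DecidableEq α] (s : Finset α) :
    ((s ×ˢ s).filter fun i => i.1 ≠ i.2).card = #s * (#s - 1) := by
  have : ((s ×ˢ s).filter fun i => i.1 ≠ i.2) = s.offDiag := by
    ext x; simp [and_assoc]
  rw [this, offDiag_card, Nat.mul_sub_one]

section Integral

variable {Ω : Type*} [MeasurableSpace Ω] {μ : Measure Ω}

theorem integral_add_mul_add_of_integral_eq_zero [IsProbabilityMeasure μ] {f g : Ω → ℝ}
    (a b : ℝ) (hf : MemLp f 2 μ) (hg : MemLp g 2 μ)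
    (hf0 : ∫ ω, f ω ∂μ = 0) (hg0 : ∫ ω, g ω ∂μ = 0) :
    ∫ ω, (f ω + a) * (g ω + b) ∂μ = (∫ ω, f ω * g ω ∂μ) + a * b := by
  have hfi : Integrable f μ := hf.integrable one_le_two
  have hgi : Integrable g μ := hg.integrable one_le_two
  have hfg : Integrable (fun ω => f ω * g ω) μ := hf.integrable_mul hg
  calc ∫ ω, (f ω + a) * (g ω + b) ∂μ
      = ∫ ω, (f ω * g ω + b * f ω) + (a * g ω + a * b) ∂μ := by
        congr 1; ext ω; ring
    _ = (∫ ω, f ω * g ω ∂μ) + a * b := by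
        have hfg' : Integrable (fun ω => f ω * g ω + b * f ω) μ := hfg.add (hfi.const_mul b)
        have hga : Integrable (fun ω => a * g ω + a * b) μ :=
          (hgi.const_mul a).add (integrable_const _)
        rw [integral_add hfg' hga, integral_add hfg (hfi.const_mul b),
          integral_add (hgi.const_mul a) (integrable_const _),
          integral_const_mul, integral_const_mul, hf0, hg0, integral_const]
        simp

variable {p m k : ℕ}

theorem integral_Gstat_eq_sum {Z : ℕ → Ω → Fin p → ℝ} (hZ : ∀ i l, MemLp (fun ω => Z i ω l) 2 μ) :
    ∫ ω, Gstat p m k (fun i => Z i ω) ∂μ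
      = ∑ l : Fin p,
          ∑ i ∈ (Icc 1 m ×ˢ Icc 1 m).filter (fun i => i.1 ≠ i.2),
            ∑ j ∈ (Icc (m + 1) k ×ˢ Icc (m + 1) k).filter (fun j => j.1 ≠ j.2),
              ∫ ω, (Z i.1 ω l - Z j.1 ω l) * (Z i.2 ω l - Z j.2 ω l) ∂μ := by
  have hterm : ∀ (l : Fin p) (i j : ℕ × ℕ),
      Integrable (fun ω => (Z i.1 ω l - Z j.1 ω l) * (Z i.2 ω l - Z j.2 ω l)) μ :=
    fun l i j => ((hZ _ l).sub (hZ _ l)).integrable_mul ((hZ _ l).sub (hZ _ l))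
  unfold Gstat
  rw [integral_finsetSum _ fun l _ =>
    integrable_finsetSum _ fun i _ => integrable_finsetSum _ fun j _ => hterm l i j]
  refine sum_congr rfl fun l _ => ?_
  rw [integral_finsetSum _ fun i _ => integrable_finsetSum _ fun j _ => hterm l i j]
  exact sum_congr rfl fun i _ => integral_finsetSum _ fun j _ => hterm l i j

theorem integral_Gstat_add_const [IsProbabilityMeasure μ] {Y : ℕ → Ω → Fin p → ℝ}
    (hY : ∀ i l, MemLp (fun ω => Y i ω l) 2 μ) (hY0 : ∀ i l, ∫ ω, Y i ω l ∂μ = 0)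
    (s : ℕ → Fin p → ℝ) :
    ∫ ω, Gstat p m k (fun i => Y i ω + s i) ∂μ
      = (∫ ω, Gstat p m k (fun i => Y i ω) ∂μ) + Gstat p m k s := by
  have hdiff : ∀ i j l, MemLp (fun ω => Y i ω l - Y j ω l) 2 μ :=
    fun i j l => (hY i l).sub (hY j l)
  have hdiff0 : ∀ i j l, ∫ ω, Y i ω l - Y j ω l ∂μ = 0 := fun i j l => by
    rw [integral_sub ((hY i l).integrable one_le_two) ((hY j l).integrable one_le_two),
      hY0, hY0, sub_zero]
  rw [integral_Gstat_eq_sum (Z := fun i ω => Y i ω + s i)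
      fun i l => (hY i l).add (memLp_const (s i l)),
    integral_Gstat_eq_sum hY]
  unfold Gstat
  simp only [← sum_add_distrib]
  refine sum_congr rfl fun l _ => sum_congr rfl fun i _ => sum_congr rfl fun j _ => ?_
  rw [← integral_add_mul_add_of_integral_eq_zero _ _ (hdiff _ _ l) (hdiff _ _ l)
    (hdiff0 _ _ l) (hdiff0 _ _ l)]
  congr 1; ext ω; simp only [Pi.add_apply]; ring

end Integral

theorem Gstat_meanShift {p m k kstar : ℕ} (hm : m ≤ kstar) (Δ : Fin p → ℝ) :
    Gstat p m k (fun i l => if kstar < i then Δ l else 0)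
      = ((k - kstar) * (k - kstar - 1) * m * (m - 1) : ℕ) * ∑ l, Δ l ^ 2 := by
  have hterm : ∀ l, ∀ i ∈ (Icc 1 m ×ˢ Icc 1 m).filter (fun i : ℕ × ℕ => i.1 ≠ i.2), ∀ j : ℕ × ℕ,
      ((if kstar < i.1 then Δ l else 0) - if kstar < j.1 then Δ l else 0) *
        ((if kstar < i.2 then Δ l else 0) - if kstar < j.2 then Δ l else 0)
      = if kstar < j.1 ∧ kstar < j.2 then Δ l ^ 2 else 0 := by
    intro l i hi j
    simp only [mem_filter, mem_product, mem_Icc] at hi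
    rw [if_neg (show ¬kstar < i.1 by omega), if_neg (show ¬kstar < i.2 by omega)]
    split_ifs <;> simp_all [sq]
  have hJ : ((Icc (m + 1) k ×ˢ Icc (m + 1) k).filter fun j : ℕ × ℕ => j.1 ≠ j.2).filter
        (fun j => kstar < j.1 ∧ kstar < j.2)
      = (Icc (kstar + 1) k ×ˢ Icc (kstar + 1) k).filter fun j => j.1 ≠ j.2 := by
    ext j; simp only [mem_filter, mem_product, mem_Icc]; omega
  unfold Gstat
  rw [mul_sum]
  refine sum_congr rfl fun l _ => ?_
  rw [sum_congr rfl fun i hi => sum_congr rfl fun j _ => hterm l i hi j]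
  simp only [← sum_filter, sum_const, hJ, card_filter_product_ne, Nat.card_Icc, nsmul_eq_mul,
    Nat.add_sub_add_right, Nat.add_sub_cancel]
  push_cast; ring

theorem stmt_18_general {Ω : Type*} [MeasurableSpace Ω] (μ : Measure Ω) [IsProbabilityMeasure μ]
    (p m k kstar : ℕ) (hmk : m < kstar)
    (Y : ℕ → Ω → Fin p → ℝ) (Δ : Fin p → ℝ)
    (hY2 : ∀ i l, MemLp (fun ω => Y i ω l) 2 μ)
    (hmean : ∀ i l, ∫ ω, Y i ω l ∂μ = 0)
    (X : ℕ → Ω → Fin p → ℝ)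
    (hX : ∀ i ω l, X i ω l = Y i ω l + if kstar < i then Δ l else 0) :
    ∫ ω, Gstat p m k (fun i => X i ω) ∂μ
      = (∫ ω, Gstat p m k (fun i => Y i ω) ∂μ)
        + ((k - kstar) * (k - kstar - 1) * m * (m - 1) : ℕ) * ∑ l, Δ l ^ 2 := by
  have hXY : X = fun i ω => Y i ω + fun l => if kstar < i then Δ l else 0 := by
    ext i ω l; exact hX i ω l
  rw [hXY, integral_Gstat_add_const hY2 hmean, Gstat_meanShift hmk.le]

/-- Under the mean-shift alternative X_i = Y_i + Δ 1{i > k*} with m < k* < k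
and independent mean-zero Y_j,
E[G_k(m)] - E[G_k^Y(m)] = (k-k*)(k-k*-1) m (m-1) ‖Δ‖₂². -/
theorem stmt_18 {Ω : Type*} [MeasurableSpace Ω] (μ : Measure Ω) [IsProbabilityMeasure μ]
    (p m k kstar : ℕ) (hmk : m < kstar) (hk : kstar < k)
    (Y : ℕ → Ω → Fin p → ℝ) (Δ : Fin p → ℝ)
    (hYm : ∀ i, Measurable (Y i))
    (hindep : iIndepFun Y μ)
    (hY2 : ∀ i l, MemLp (fun ω => Y i ω l) 2 μ)
    (hmean : ∀ i l, ∫ ω, Y i ω l ∂μ = 0)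
    (X : ℕ → Ω → Fin p → ℝ)
    (hX : ∀ i ω l, X i ω l = Y i ω l + if kstar < i then Δ l else 0) :
    ∫ ω, Gstat p m k (fun i => X i ω) ∂μ
      = (∫ ω, Gstat p m k (fun i => Y i ω) ∂μ)
        + ((k - kstar) * (k - kstar - 1) * m * (m - 1) : ℕ) * ∑ l, Δ l ^ 2 :=
  stmt_18_general μ p m k kstar hmk Y Δ hY2 hmean X hX
end
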